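/- Let m be even, m ≥ 2, and let y ∈ Ỹ_m with y_0 = 0 and y_1 = 1. Then the set S̃(y) is nonempty, where S̃(y) is the set of pairs (x, x') ∈ X_m × X̃_m such that x + x' = y, 𝔖(x) ∪ 𝔖(x') = R(y), 𝔖(x) ∩ 𝔖(x') = R_0(y), and, in case the only odd-cardinality interval of 𝔉(y) is the one containing 0, additionally 𝔖(x') = {0}. -/

import Mathlib

open Finset

/-- `X_m`: sequences `(x_0,…,x_m)` in `ℕ` with `x i ≤ x (i+1)` and `x i < x (i+2)`. -/
def IsX (m : ℕ) (x : ℕ → ℕ) : Prop :=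
  (∀ i, i < m → x i ≤ x (i + 1)) ∧ (∀ i, i + 2 ≤ m → x i < x (i + 2))

/-- `Y_m`: sequences with `y i ≤ y (i+1)` and `y i + 2 ≤ y (i+2)`. -/
def IsY (m : ℕ) (y : ℕ → ℕ) : Prop :=
  (∀ i, i < m → y i ≤ y (i + 1)) ∧ (∀ i, i + 2 ≤ m → y i + 2 ≤ y (i + 2))

/-- `ℰ_m`: weakly increasing sequences. -/
def IsE (m : ℕ) (e : ℕ → ℕ) : Prop := ∀ i, i < m → e i ≤ e (i + 1)

/-- `𝔖(x)`: indices `i ∈ [0,m]` with `x (i-1) < x i < x (i+1)`,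
with conventions `x_{-1} = -∞`, `x_{m+1} = +∞`. -/
def SS (m : ℕ) (x : ℕ → ℕ) : Finset ℕ :=
  (Finset.range (m + 1)).filter
    (fun i => (i = 0 ∨ x (i - 1) < x i) ∧ (i = m ∨ x i < x (i + 1)))

/-- `𝔉(y)`: intervals `[i,j] ⊆ [0,m]` with
`y_{i-1}-(i-1) < y_i-i = ⋯ = y_j-j < y_{j+1}-(j+1)` (conventions `±∞` at the ends),
encoded as pairs `(i, j)`. -/
def FF (m : ℕ) (y : ℕ → ℕ) : Finset (ℕ × ℕ) :=
  ((Finset.range (m + 1)) ×ˢ (Finset.range (m + 1))).filter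
    (fun p => p.1 ≤ p.2 ∧
      (p.1 = 0 ∨ ((y (p.1 - 1) : ℤ) - ((p.1 : ℤ) - 1) < (y p.1 : ℤ) - (p.1 : ℤ))) ∧
      (p.2 = m ∨ ((y p.2 : ℤ) - (p.2 : ℤ) < (y (p.2 + 1) : ℤ) - ((p.2 : ℤ) + 1))) ∧
      (∀ k ∈ Finset.Ico p.1 p.2, ((y k : ℤ) - (k : ℤ) = (y (k + 1) : ℤ) - ((k : ℤ) + 1))))

/-- `𝔉'(y)`: the intervals in `𝔉(y)` of odd cardinality. -/
def FF' (m : ℕ) (y : ℕ → ℕ) : Finset (ℕ × ℕ) :=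
  (FF m y).filter (fun p => Odd (p.2 - p.1 + 1))

/-- `R(y)`: endpoints of intervals in `𝔉(y)`. -/
def RR (m : ℕ) (y : ℕ → ℕ) : Finset ℕ :=
  (Finset.range (m + 1)).filter (fun k => ∃ p ∈ FF m y, k = p.1 ∨ k = p.2)

/-- `R_0(y)`: those `k` with `[k,k] ∈ 𝔉(y)`. -/
def RR0 (m : ℕ) (y : ℕ → ℕ) : Finset ℕ :=
  (Finset.range (m + 1)).filter (fun k => (k, k) ∈ FF m y)

/-- `S(y)`: pairs `(x, x') ∈ X_m × X_m` with `x + x' = y`,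
`𝔖(x) ∪ 𝔖(x') = R(y)`, `𝔖(x) ∩ 𝔖(x') = R_0(y)`, and `𝔖(x') = ∅` if `𝔉'(y) = ∅`. -/
def IsS (m : ℕ) (y x x' : ℕ → ℕ) : Prop :=
  IsX m x ∧ IsX m x' ∧ (∀ i, i ≤ m → x i + x' i = y i) ∧
  SS m x ∪ SS m x' = RR m y ∧ SS m x ∩ SS m x' = RR0 m y ∧
  (FF' m y = ∅ → SS m x' = ∅)

/-- `X̃_m`: elements of `X_m` with `x 0 = 0`, `x 1 ≥ 1`. -/
def IsXt (m : ℕ) (x : ℕ → ℕ) : Prop := IsX m x ∧ x 0 = 0 ∧ 1 ≤ x 1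

/-- `S̃(y)`: pairs `(x, x') ∈ X_m × X̃_m` with `x + x' = y`,
`𝔖(x) ∪ 𝔖(x') = R(y)`, `𝔖(x) ∩ 𝔖(x') = R_0(y)`, and `𝔖(x') = {0}` in case
every odd-cardinality interval of `𝔉(y)` has left endpoint `0`. -/
def IsSt (m : ℕ) (y x x' : ℕ → ℕ) : Prop :=
  IsX m x ∧ IsXt m x' ∧ (∀ i, i ≤ m → x i + x' i = y i) ∧
  SS m x ∪ SS m x' = RR m y ∧ SS m x ∩ SS m x' = RR0 m y ∧
  ((∀ p ∈ FF' m y, p.1 = 0) → SS m x' = {0})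

/-!
Write `y = x + x'` with `x, x' ∈ X_m` such that both rise at every jump of `y` (an increment
`≥ 2`). Then `x` and `x'` rise together exactly at the jumps, and since neither stalls twice in a
row, every endpoint of an interval of `𝔉(y)` is a strict point of one of them; this gives both
set conditions. In general `x = ⌊y/2⌋`, `x' = ⌈y/2⌉` is such a split. If every odd interval of
`𝔉(y)` starts at `0`, the points after any jump of `y` are tiled by even intervals and by pairs
around flat steps, so (`m` being even) `y` jumps only at even steps and never stalls at one; then
`x' = ⌈i/2⌉` is a split, and `𝔖(x') = {0}`.
-/

lemma mem_SS_iff {m : ℕ} {x : ℕ → ℕ} {i : ℕ} :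
    i ∈ SS m x ↔ i ≤ m ∧ (i = 0 ∨ x (i - 1) < x i) ∧ (i = m ∨ x i < x (i + 1)) := by
  simp [SS]

lemma mem_FF_iff {m : ℕ} {y : ℕ → ℕ} {i j : ℕ} :
    (i, j) ∈ FF m y ↔ i ≤ j ∧ j ≤ m ∧ (i = 0 ∨ y (i - 1) + 2 ≤ y i) ∧
      (j = m ∨ y j + 2 ≤ y (j + 1)) ∧ ∀ k ∈ Ico i j, y (k + 1) = y k + 1 := by
  simp only [FF, mem_filter, mem_product, mem_range]
  constructor
  · rintro ⟨⟨-, hjm⟩, hij, hi, hj, hrun⟩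
    exact ⟨hij, by omega, by omega, by omega, fun k hk => by have := hrun k hk; omega⟩
  · rintro ⟨hij, hjm, hi, hj, hrun⟩
    exact ⟨⟨by omega, by omega⟩, hij, by omega, by omega,
      fun k hk => by have := hrun k hk; omega⟩

lemma mem_FF'_iff {m : ℕ} {y : ℕ → ℕ} {i j : ℕ} :
    (i, j) ∈ FF' m y ↔ (i, j) ∈ FF m y ∧ Odd (j - i + 1) :=
  mem_filter

lemma mem_RR0_iff {m : ℕ} {y : ℕ → ℕ} {i : ℕ} :
    i ∈ RR0 m y ↔ i ≤ m ∧ (i = 0 ∨ y (i - 1) + 2 ≤ y i) ∧ (i = m ∨ y i + 2 ≤ y (i + 1)) := by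
  simp [RR0, mem_FF_iff]

lemma isY_of_add_eq {m : ℕ} {x x' y : ℕ → ℕ} (hx : IsX m x) (hx' : IsX m x')
    (hsum : ∀ i ≤ m, x i + x' i = y i) : IsY m y := by
  refine ⟨fun i hi => ?_, fun i hi => ?_⟩
  · have := hx.1 i hi; have := hx'.1 i hi
    have := hsum i (by omega); have := hsum (i + 1) (by omega)
    omega
  · have := hx.2 i hi; have := hx'.2 i hi
    have := hsum i (by omega); have := hsum (i + 2) hi
    omega

namespace IsY

variable {m : ℕ} {y : ℕ → ℕ}

lemma exists_mem_FF_of_start (hy : IsY m y) {i : ℕ} (him : i ≤ m)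
    (hleft : i = 0 ∨ y (i - 1) + 2 ≤ y i) (hright : i = m ∨ y i < y (i + 1)) :
    ∃ j, (i, j) ∈ FF m y := by
  classical
  have hP : ∃ j, i ≤ j ∧ (j = m ∨ y j + 2 ≤ y (j + 1)) := ⟨m, him, Or.inl rfl⟩
  set j := Nat.find hP
  obtain ⟨hij, hj⟩ := Nat.find_spec hP
  have hjm : j ≤ m := Nat.find_min' hP ⟨him, Or.inl rfl⟩
  have hsmall : ∀ k ∈ Ico i j, k < m ∧ y (k + 1) < y k + 2 := fun k hk => by
    have := Nat.find_min hP (mem_Ico.1 hk).2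
    simp only [mem_Ico] at hk
    omega
  refine ⟨j, mem_FF_iff.2 ⟨hij, hjm, hleft, hj, fun k hk => ?_⟩⟩
  obtain ⟨hkm, hk2⟩ := hsmall k hk
  simp only [mem_Ico] at hk
  rcases Nat.eq_or_lt_of_le hk.1 with rfl | hik
  · omega
  · -- the step before `k` is a unit step, so the step at `k` cannot vanish
    obtain ⟨-, hprev⟩ := hsmall (k - 1) (mem_Ico.2 ⟨by omega, by omega⟩)
    have := hy.2 (k - 1) (by omega)
    rw [Nat.sub_add_cancel (by omega : 1 ≤ k)] at hprev
    rw [show k - 1 + 2 = k + 1 by omega] at this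
    omega

lemma exists_mem_FF_of_end (hy : IsY m y) {j : ℕ} (hjm : j ≤ m)
    (hleft : j = 0 ∨ y (j - 1) < y j) (hright : j = m ∨ y j + 2 ≤ y (j + 1)) :
    ∃ i, (i, j) ∈ FF m y := by
  classical
  set P : ℕ → Prop := fun l => l = 0 ∨ y (l - 1) + 2 ≤ y l
  set i := Nat.findGreatest P j
  have hi : P i := Nat.findGreatest_spec (Nat.zero_le j) (Or.inl rfl : P 0)
  have hsmall : ∀ k, i ≤ k → k < j → y (k + 1) < y k + 2 := fun k hik hkj => by
    have := Nat.findGreatest_is_greatest (Nat.lt_succ_of_le hik) hkj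
    simp only [P, not_or, not_le] at this
    exact this.2
  refine ⟨i, mem_FF_iff.2 ⟨Nat.findGreatest_le j, hjm, hi, hright, fun k hk => ?_⟩⟩
  simp only [mem_Ico] at hk
  have hk2 := hsmall k hk.1 hk.2
  rcases Nat.eq_or_lt_of_le (show k + 1 ≤ j by omega) with rfl | hkj
  · simp only [add_tsub_cancel_right] at hleft
    omega
  · -- the step after `k` is a unit step, so the step at `k` cannot vanish
    have := hsmall (k + 1) (by omega) hkj
    have : y k + 2 ≤ y (k + 1 + 1) := hy.2 k (by omega)
    omega

lemma mem_RR_iff (hy : IsY m y) {i : ℕ} :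
    i ∈ RR m y ↔ i ≤ m ∧
      ((i = 0 ∨ y (i - 1) + 2 ≤ y i) ∧ (i = m ∨ y i < y (i + 1)) ∨
        (i = 0 ∨ y (i - 1) < y i) ∧ (i = m ∨ y i + 2 ≤ y (i + 1))) := by
  simp only [RR, mem_filter, mem_range, Nat.lt_succ_iff, and_congr_right_iff]
  intro him
  constructor
  · rintro ⟨⟨p, q⟩, hpq, hi⟩
    obtain ⟨hpq, hqm, hp, hq, hrun⟩ := mem_FF_iff.1 hpq
    rcases Nat.eq_or_lt_of_le hpq with rfl | hlt
    · rcases hi with rfl | rfl <;> omega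
    · have := hrun p (mem_Ico.2 ⟨le_rfl, hlt⟩)
      have := hrun (q - 1) (mem_Ico.2 ⟨by omega, by omega⟩)
      rw [Nat.sub_add_cancel (by omega : 1 ≤ q)] at this
      rcases hi with rfl | rfl <;> omega
  · rintro (⟨hl, hr⟩ | ⟨hl, hr⟩)
    · obtain ⟨j, hj⟩ := hy.exists_mem_FF_of_start him hl hr
      exact ⟨_, hj, Or.inl rfl⟩
    · obtain ⟨l, hl⟩ := hy.exists_mem_FF_of_end him hl hr
      exact ⟨_, hl, Or.inr rfl⟩

lemma self_le (hy : IsY m y) (h01 : y 0 < y 1) {i : ℕ} (hi : i ≤ m) : i ≤ y i := by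
  induction i using Nat.twoStepInduction with
  | zero => omega
  | one => omega
  | more n ih _ => have := hy.2 n hi; have := ih (by omega); omega

theorem even_sub_of_jump (hy : IsY m y) (H : ∀ p ∈ FF' m y, p.1 = 0) {k : ℕ} (hk : k < m)
    (hjump : y k + 2 ≤ y (k + 1)) : Even (m - k) := by
  have hFF_even : ∀ i j, 0 < i → (i, j) ∈ FF m y → Even (j - i + 1) := fun i j hi hij =>
    Nat.not_odd_iff_even.1 fun hodd => by
      have := H _ (mem_FF'_iff.2 ⟨hij, hodd⟩)
      omega
  by_cases hflat : k + 1 < m ∧ y (k + 2) ≤ y (k + 1)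
  · by_cases hkm : k + 2 = m
    · exact ⟨1, by omega⟩
    have : y (k + 1) + 2 ≤ y (k + 3) := hy.2 (k + 1) (by omega)
    have := hy.even_sub_of_jump H (k := k + 2) (by omega) (show y (k + 2) + 2 ≤ y (k + 3) by omega)
    rw [Nat.even_iff] at this ⊢
    omega
  · obtain ⟨j, hj⟩ := hy.exists_mem_FF_of_start (i := k + 1) (by omega)
      (Or.inr (by simpa using hjump)) (show k + 1 = m ∨ y (k + 1) < y (k + 2) by omega)
    have hcard := hFF_even _ _ (by omega) hj
    obtain ⟨hkj, hjm, -, hjr, -⟩ := mem_FF_iff.1 hj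
    rw [Nat.even_iff] at hcard ⊢
    rcases Nat.eq_or_lt_of_le hjm with rfl | hjm
    · omega
    · have := hy.even_sub_of_jump H hjm (hjr.resolve_left hjm.ne)
      rw [Nat.even_iff] at this
      omega
termination_by m - k

lemma lt_succ_of_even (hy : IsY m y) (H : ∀ p ∈ FF' m y, p.1 = 0) (hm : Even m)
    (h01 : y 0 < y 1) {k : ℕ} (hk : k < m) (hke : Even k) : y k < y (k + 1) := by
  rcases k with _ | j
  · exact h01
  by_contra! hflat
  have : y j + 2 ≤ y (j + 1 + 1) := hy.2 j (by omega)
  have := hy.even_sub_of_jump H (k := j) (by omega) (by omega)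
  rw [Nat.even_iff] at *
  omega

lemma isX_add_div_two (hy : IsY m y) (c : ℕ) : IsX m fun i => (y i + c) / 2 :=
  ⟨fun i hi => by have := hy.1 i hi; dsimp only; omega,
    fun i hi => by have := hy.2 i hi; dsimp only; omega⟩

end IsY

section Split

variable {m : ℕ} {x x' y : ℕ → ℕ}

lemma SS_union_SS_eq_RR (hx : IsX m x) (hx' : IsX m x') (hsum : ∀ i ≤ m, x i + x' i = y i)
    (hjump : ∀ k < m, y k + 2 ≤ y (k + 1) → x k < x (k + 1) ∧ x' k < x' (k + 1)) :
    SS m x ∪ SS m x' = RR m y := by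
  ext i
  simp only [mem_union, mem_SS_iff, (isY_of_add_eq hx hx' hsum).mem_RR_iff]
  have hstep : ∀ k < m, x k ≤ x (k + 1) ∧ x' k ≤ x' (k + 1) ∧
      x k + x' k = y k ∧ x (k + 1) + x' (k + 1) = y (k + 1) :=
    fun k hk => ⟨hx.1 k hk, hx'.1 k hk, hsum k hk.le, hsum (k + 1) hk⟩
  have htwo : ∀ k, k + 2 ≤ m → x k < x (k + 1 + 1) ∧ x' k < x' (k + 1 + 1) :=
    fun k hk => ⟨hx.2 k hk, hx'.2 k hk⟩
  rcases i with _ | j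
  · have := hstep 0; have := hjump 0
    omega
  · simp only [add_tsub_cancel_right]
    have := hstep j; have := hstep (j + 1); have := hjump j; have := hjump (j + 1)
    have := htwo j
    omega

lemma SS_inter_SS_eq_RR0 (hx : IsX m x) (hx' : IsX m x') (hsum : ∀ i ≤ m, x i + x' i = y i)
    (hjump : ∀ k < m, y k + 2 ≤ y (k + 1) → x k < x (k + 1) ∧ x' k < x' (k + 1)) :
    SS m x ∩ SS m x' = RR0 m y := by
  ext i
  simp only [mem_inter, mem_SS_iff, mem_RR0_iff]
  have hstep : ∀ k < m, x k ≤ x (k + 1) ∧ x' k ≤ x' (k + 1) ∧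
      x k + x' k = y k ∧ x (k + 1) + x' (k + 1) = y (k + 1) :=
    fun k hk => ⟨hx.1 k hk, hx'.1 k hk, hsum k hk.le, hsum (k + 1) hk⟩
  rcases i with _ | j
  · have := hstep 0; have := hjump 0
    omega
  · simp only [add_tsub_cancel_right]
    have := hstep j; have := hstep (j + 1); have := hjump j; have := hjump (j + 1)
    omega

lemma isSt_of_split (hx : IsX m x) (hx' : IsXt m x') (hsum : ∀ i ≤ m, x i + x' i = y i)
    (hjump : ∀ k < m, y k + 2 ≤ y (k + 1) → x k < x (k + 1) ∧ x' k < x' (k + 1))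
    (hodd : (∀ p ∈ FF' m y, p.1 = 0) → SS m x' = {0}) : IsSt m y x x' :=
  ⟨hx, hx', hsum, SS_union_SS_eq_RR hx hx'.1 hsum hjump,
    SS_inter_SS_eq_RR0 hx hx'.1 hsum hjump, hodd⟩

end Split

lemma SS_half_succ {m : ℕ} (hm : Even m) : SS m (fun i => (i + 1) / 2) = {0} := by
  ext i
  rw [mem_SS_iff, mem_singleton, Nat.even_iff] at *
  omega

namespace IsY

variable {m : ℕ} {y : ℕ → ℕ}

lemma isSt_div_two (hy : IsY m y) (h0 : y 0 = 0) (h1 : 1 ≤ y 1)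
    (H : ¬∀ p ∈ FF' m y, p.1 = 0) : IsSt m y (fun i => y i / 2) (fun i => (y i + 1) / 2) :=
  isSt_of_split (by simpa using hy.isX_add_div_two 0)
    ⟨hy.isX_add_div_two 1, by simp [h0], by dsimp only; omega⟩ (fun i _ => by omega)
    (fun k _ hjump => by omega) (absurd · H)

lemma isSt_sub_half_succ (hy : IsY m y) (H : ∀ p ∈ FF' m y, p.1 = 0) (hm : Even m)
    (h01 : y 0 < y 1) :
    IsSt m y (fun i => y i - (i + 1) / 2) (fun i => (i + 1) / 2) := by
  have hstep := fun k hk => hy.lt_succ_of_even H hm h01 (k := k) hk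
  have hle := fun i hi => hy.self_le h01 (i := i) hi
  refine isSt_of_split ⟨fun k hk => ?_, fun k hk => ?_⟩
    ⟨⟨fun _ _ => by dsimp only; omega, fun _ _ => by dsimp only; omega⟩, rfl, le_rfl⟩
    (fun i hi => by have := hle i hi; omega) (fun k hk hjump => ?_)
    (fun _ => SS_half_succ hm)
  · have := hy.1 k hk; have := hle k hk.le; have := hstep k hk
    rw [Nat.even_iff] at this
    dsimp only
    omega
  · have := hy.2 k hk; have := hle k (by omega)
    dsimp only
    omega
  · have := hy.even_sub_of_jump H hk hjump; have := hle k hk.le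
    rw [Nat.even_iff] at *
    omega

end IsY

theorem stmt13_general (m : ℕ) (hm : Even m) (y : ℕ → ℕ) (hy : IsY m y)
    (h0 : y 0 = 0) (h1 : y 1 = 1) : ∃ x x' : ℕ → ℕ, IsSt m y x x' := by
  by_cases H : ∀ p ∈ FF' m y, p.1 = 0
  · exact ⟨_, _, hy.isSt_sub_half_succ H hm (by omega)⟩
  · exact ⟨_, _, hy.isSt_div_two h0 h1.ge H⟩

theorem stmt13 (m : ℕ) (hm : Even m) (h2 : 2 ≤ m) (y : ℕ → ℕ) (hy : IsY m y)
    (h0 : y 0 = 0) (h1 : y 1 = 1) : ∃ x x' : ℕ → ℕ, IsSt m y x x' :=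
  stmt13_general m hm y hy h0 h1
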